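/- (Up-step contiguity in a_{2k}.) Fix k with 1 ≤ k ≤ n and set Ψ(x) = Φ(α − e_k, δ − 1; x) = ∫_a^b t^{−δ} (x_{1k}+x_{2k}t)^{α_k−1} ∏_{j≠k} (x_{1j}+x_{2j}t)^{α_j} dt. Then at every point x with all coordinates positive, Σ_{i≠k} x_{1k}x_{2i}·∂Ψ/∂x_{1i}(x) + x_{2k}·Σ_{i≠k} x_{2i}·∂Ψ/∂x_{2i}(x) + α_k·x_{2k}·Ψ(x) = δ·Φ(α,δ;x) + [g(t,x)]_{t=a}^{t=b}. -/

import Mathlib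

open Complex Function

/-- Partial derivative of `f` with respect to the coordinate `p`. -/
noncomputable def pd {n : ℕ} (p : Fin 2 × Fin n)
    (f : ((Fin 2 × Fin n) → ℝ) → ℂ) (x : (Fin 2 × Fin n) → ℝ) : ℂ :=
  deriv (fun s : ℝ => f (Function.update x p s)) (x p)

/-- `Φ(α,δ;x) = ∫_a^b t^(−δ−1) ∏ₖ (x_{1k} + x_{2k} t)^{α_k} dt`; the first row
of `x` is indexed by `0 : Fin 2`, the second row by `1 : Fin 2`. -/
noncomputable def Phi {n : ℕ} (α : Fin n → ℂ) (δ : ℂ) (a b : ℝ)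
    (x : (Fin 2 × Fin n) → ℝ) : ℂ :=
  ∫ t in a..b, (t : ℂ) ^ (-δ - 1)
    * ∏ k, ((x (0, k) : ℂ) + (x (1, k) : ℂ) * (t : ℂ)) ^ (α k)

/-- `g(t,x) = t^(−δ) ∏ₖ (x_{1k} + x_{2k} t)^{α_k}`. -/
noncomputable def gfun {n : ℕ} (α : Fin n → ℂ) (δ : ℂ) (t : ℝ)
    (x : (Fin 2 × Fin n) → ℝ) : ℂ :=
  (t : ℂ) ^ (-δ) * ∏ k, ((x (0, k) : ℂ) + (x (1, k) : ℂ) * (t : ℂ)) ^ (α k)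

/-!
On `[a, b] ⊂ (0, ∞)` all integrands are smooth, so partial derivatives pass under the integral
sign: with `L_j(t) = x_{1j} + x_{2j} t`, the derivative `∂/∂x_{ri}` of `∏_j L_j^{γ_j}` is
`γ_i t^r L_i^{γ_i - 1} ∏_{j ≠ i} L_j^{γ_j}`. For `i ≠ k` the combination
`x_{1k} ∂/∂x_{1i} + x_{2k} ∂/∂x_{2i}` multiplies this by `L_k`, which raises the exponent
`α_k - 1` of `Ψ` back to `α_k`. The left-hand side thus becomes
`∫ t^{-δ} ∑_i α_i x_{2i} L_i^{α_i - 1} ∏_{j ≠ i} L_j^{α_j} dt = ∫ t^{-δ} (d/dt) ∏_j L_j^{α_j} dt`,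
and integration by parts turns this into `δ Φ(α, δ; x) + [g(t, x)]_{t=a}^{t=b}`.
-/

open MeasureTheory Metric Finset
open scoped Interval

theorem hasDerivAt_intervalIntegral_of_continuousOn {E : Type*} [NormedAddCommGroup E]
    [NormedSpace ℝ E] {F F' : ℝ → ℝ → E} {x₀ ε a b : ℝ} (hε : 0 < ε)
    (hF : ContinuousOn (fun q : ℝ × ℝ => F q.1 q.2) (closedBall x₀ ε ×ˢ [[a, b]]))
    (hF' : ContinuousOn (fun q : ℝ × ℝ => F' q.1 q.2) (closedBall x₀ ε ×ˢ [[a, b]]))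
    (hderiv : ∀ t ∈ [[a, b]], ∀ s ∈ ball x₀ ε, HasDerivAt (F · t) (F' s t) s) :
    HasDerivAt (fun s => ∫ t in a..b, F s t) (∫ t in a..b, F' x₀ t) x₀ := by
  have slice : ∀ {G : ℝ → ℝ → E},
      ContinuousOn (fun q : ℝ × ℝ => G q.1 q.2) (closedBall x₀ ε ×ˢ [[a, b]]) →
      ∀ s ∈ closedBall x₀ ε, ContinuousOn (G s) [[a, b]] := fun hG s hs =>
    hG.comp (Continuous.prodMk_right s).continuousOn fun t ht => ⟨hs, ht⟩
  have hx₀ : x₀ ∈ closedBall x₀ ε := mem_closedBall_self hε.le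
  obtain ⟨C, hC⟩ :=
    (isCompact_closedBall x₀ ε |>.prod isCompact_uIcc).exists_bound_of_continuousOn hF'
  refine (intervalIntegral.hasDerivAt_integral_of_dominated_loc_of_deriv_le (bound := fun _ => C)
    (ball_mem_nhds x₀ hε) ?_ ((slice hF x₀ hx₀).intervalIntegrable)
    ((slice hF' x₀ hx₀).mono Set.uIoc_subset_uIcc |>.aestronglyMeasurable measurableSet_uIoc)
    (ae_of_all _ fun t ht s hs => hC (s, t) ⟨ball_subset_closedBall hs, Set.uIoc_subset_uIcc ht⟩)
    intervalIntegrable_const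
    (ae_of_all _ fun t ht s hs => hderiv t (Set.uIoc_subset_uIcc ht) s hs)).2
  filter_upwards [ball_mem_nhds x₀ hε] with s hs
  exact (slice hF s (ball_subset_closedBall hs)).mono Set.uIoc_subset_uIcc
    |>.aestronglyMeasurable measurableSet_uIoc

section Products

variable {ι : Type*} [Fintype ι] [DecidableEq ι]

theorem prod_cpow_update (z γ : ι → ℂ) (i : ι) (c : ℂ) :
    ∏ j, z j ^ update γ i c j = z i ^ c * ∏ j ∈ univ.erase i, z j ^ γ j := by
  rw [← mul_prod_erase univ _ (mem_univ i), update_self]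
  congr 1
  exact prod_congr rfl fun j hj => by rw [update_of_ne (ne_of_mem_erase hj)]

theorem prod_cpow_update_sub_one_mul {z : ι → ℂ} (γ : ι → ℂ) {i : ι} (hz : z i ≠ 0) :
    (∏ j, z j ^ update γ i (γ i - 1) j) * z i = ∏ j, z j ^ γ j := by
  rw [prod_cpow_update, ← mul_prod_erase univ (fun j => z j ^ γ j) (mem_univ i),
    cpow_sub _ _ hz, cpow_one]
  field_simp

theorem hasDerivAt_prod_cpow {f : ι → ℝ → ℂ} {f' : ι → ℂ} {γ : ι → ℂ} {t : ℝ}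
    (hf : ∀ j, HasDerivAt (f j) (f' j) t) (hslit : ∀ j, f j t ∈ slitPlane) :
    HasDerivAt (fun r => ∏ j, f j r ^ γ j)
      (∑ i, γ i * f' i * ∏ j, f j t ^ update γ i (γ i - 1) j) t := by
  have hpow : ∀ j ∈ univ, HasDerivAt (fun r => f j r ^ γ j)
      (γ j * f j t ^ (γ j - 1) * f' j) t := fun j _ =>
    (hasStrictDerivAt_cpow_const (hslit j)).hasDerivAt.comp t (hf j)
  refine (HasDerivAt.fun_finsetProd hpow).congr_deriv (sum_congr rfl fun i _ => ?_)
  rw [prod_cpow_update, smul_eq_mul]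
  ring

end Products

section PhiIntegrand

variable {n : ℕ}

noncomputable def phiIntegrand (γ : Fin n → ℂ) (e : ℂ) (x : Fin 2 × Fin n → ℝ) (t : ℝ) : ℂ :=
  (t : ℂ) ^ e * ∏ j, ((x (0, j) : ℂ) + (x (1, j) : ℂ) * (t : ℂ)) ^ γ j

theorem Phi_eq_integral_phiIntegrand (α : Fin n → ℂ) (δ : ℂ) (a b : ℝ) :
    Phi α δ a b = fun x => ∫ t in a..b, phiIntegrand α (-δ - 1) x t := rfl

theorem gfun_eq_phiIntegrand (α : Fin n → ℂ) (δ : ℂ) (t : ℝ) (x : Fin 2 × Fin n → ℝ) :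
    gfun α δ t x = phiIntegrand α (-δ) x t := rfl

theorem ofReal_add_mul_mem_slitPlane {u v t : ℝ} (hu : 0 < u) (hv : 0 < v) (ht : 0 < t) :
    (u : ℂ) + v * t ∈ slitPlane := by
  exact_mod_cast ofReal_mem_slitPlane.2 (by positivity : 0 < u + v * t)

theorem continuousAt_phiIntegrand (γ : Fin n → ℂ) (e : ℂ) {q : (Fin 2 × Fin n → ℝ) × ℝ}
    (hx : ∀ p, 0 < q.1 p) (ht : 0 < q.2) :
    ContinuousAt (fun q : (Fin 2 × Fin n → ℝ) × ℝ => phiIntegrand γ e q.1 q.2) q := by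
  refine ContinuousAt.mul ?_ (tendsto_finsetProd _ fun j _ => ?_)
  · exact (continuous_ofReal.comp continuous_snd).continuousAt.cpow continuousAt_const
      (ofReal_mem_slitPlane.2 ht)
  · exact ContinuousAt.cpow (by fun_prop) continuousAt_const
      (ofReal_add_mul_mem_slitPlane (hx _) (hx _) ht)

theorem continuousOn_phiIntegrand (γ : Fin n → ℂ) (e : ℂ) {x : Fin 2 × Fin n → ℝ}
    (hx : ∀ p, 0 < x p) : ContinuousOn (phiIntegrand γ e x) (Set.Ioi 0) := fun t ht =>
  ((continuousAt_phiIntegrand γ e (q := (x, t)) hx ht).comp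
    (Continuous.prodMk_right x).continuousAt).continuousWithinAt

theorem hasDerivAt_phiIntegrand (γ : Fin n → ℂ) (e : ℂ) {x : Fin 2 × Fin n → ℝ}
    (hx : ∀ p, 0 < x p) {t : ℝ} (ht : 0 < t) :
    HasDerivAt (phiIntegrand γ e x) (e * phiIntegrand γ (e - 1) x t
      + ∑ i, γ i * x (1, i) * phiIntegrand (update γ i (γ i - 1)) e x t) t := by
  have hpow : HasDerivAt (fun r : ℝ => (r : ℂ) ^ e) (e * (t : ℂ) ^ (e - 1)) t := by
    simpa using (hasStrictDerivAt_cpow_const (c := e) (ofReal_mem_slitPlane.2 ht)).hasDerivAt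
      |>.comp_ofReal
  have hprod := hasDerivAt_prod_cpow (γ := γ)
    (fun j => ((hasDerivAt_id (t : ℂ)).const_mul (x (1, j) : ℂ)).const_add (x (0, j) : ℂ)
      |>.comp_ofReal) (fun j => ofReal_add_mul_mem_slitPlane (hx (0, j)) (hx (1, j)) ht)
  refine (hpow.mul hprod).congr_deriv ?_
  simp only [phiIntegrand, mul_sum, id, mul_one]
  congr 1
  · ring
  · exact sum_congr rfl fun i _ => by ring

theorem hasDerivAt_phiIntegrand_update (γ : Fin n → ℂ) (e : ℂ) {y : Fin 2 × Fin n → ℝ}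
    (hy : ∀ p, 0 < y p) {t : ℝ} (ht : 0 < t) (r : Fin 2) (i : Fin n) :
    HasDerivAt (fun s => phiIntegrand γ e (update y (r, i) s) t)
      (γ i * (t : ℂ) ^ (r : ℕ) * phiIntegrand (update γ i (γ i - 1)) e y t) (y (r, i)) := by
  have hcoord : ∀ q, HasDerivAt (fun s => (update y (r, i) s q : ℂ))
      ((Pi.single (r, i) 1 : Fin 2 × Fin n → ℝ) q : ℂ) (y (r, i)) := fun q =>
    (hasDerivAt_pi.1 (hasDerivAt_update y (r, i) (y (r, i))) q).ofReal_comp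
  have hprod := hasDerivAt_prod_cpow (γ := γ)
    (fun j => (hcoord (0, j)).add ((hcoord (1, j)).mul_const (t : ℂ)))
    (fun j => by simpa using ofReal_add_mul_mem_slitPlane (hy (0, j)) (hy (1, j)) ht)
  refine (hprod.const_mul ((t : ℂ) ^ e)).congr_deriv ?_
  rw [sum_eq_single i]
  · fin_cases r <;> simp [phiIntegrand] <;> ring
  · intro j _ hji
    simp [hji]
  · simp

end PhiIntegrand

section Integrals

variable {n : ℕ} {a b : ℝ}

theorem pos_of_mem_uIcc (ha : 0 < a) (hb : 0 < b) {t : ℝ} (ht : t ∈ [[a, b]]) : 0 < t :=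
  lt_of_lt_of_le (lt_min ha hb) ht.1

theorem intervalIntegrable_pow_mul_phiIntegrand (γ : Fin n → ℂ) (e : ℂ) {x : Fin 2 × Fin n → ℝ}
    (hx : ∀ p, 0 < x p) (ha : 0 < a) (hb : 0 < b) (m : ℕ) :
    IntervalIntegrable (fun t => (t : ℂ) ^ m * phiIntegrand γ e x t) volume a b :=
  ((continuous_ofReal.pow m).continuousOn.mul ((continuousOn_phiIntegrand γ e hx).mono
    fun _ => pos_of_mem_uIcc ha hb)).intervalIntegrable

theorem pd_integral_phiIntegrand (γ : Fin n → ℂ) (e : ℂ) {x : Fin 2 × Fin n → ℝ}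
    (hx : ∀ p, 0 < x p) (ha : 0 < a) (hb : 0 < b) (r : Fin 2) (i : Fin n) :
    pd (r, i) (fun y => ∫ t in a..b, phiIntegrand γ e y t) x
      = γ i * ∫ t in a..b, (t : ℂ) ^ (r : ℕ) * phiIntegrand (update γ i (γ i - 1)) e x t := by
  have hball : ∀ s ∈ closedBall (x (r, i)) (x (r, i) / 2), 0 < s := fun s hs => by
    have := (abs_le.1 (mem_closedBall_iff_norm.1 hs)).1
    linarith [hx (r, i)]
  have hupdate : ∀ s, 0 < s → ∀ q, 0 < update x (r, i) s q := fun s hs q => by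
    rcases eq_or_ne q (r, i) with rfl | hq
    · simpa
    · simpa [hq] using hx q
  have hcont : ∀ (γ' : Fin n → ℂ) (m : ℕ), ContinuousOn
      (fun q : ℝ × ℝ => (q.2 : ℂ) ^ m * phiIntegrand γ' e (update x (r, i) q.1) q.2)
      (closedBall (x (r, i)) (x (r, i) / 2) ×ˢ [[a, b]]) := fun γ' m q hq => by
    have hφ := continuousAt_phiIntegrand γ' e (q := (update x (r, i) q.1, q.2))
      (hupdate _ (hball _ hq.1)) (pos_of_mem_uIcc ha hb hq.2)
    have hmap : Continuous fun q : ℝ × ℝ => (update x (r, i) q.1, q.2) := by fun_prop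
    exact (((continuous_ofReal.comp continuous_snd).pow m).continuousAt.mul
      (hφ.comp_of_eq hmap.continuousAt rfl)).continuousWithinAt
  have hderiv := hasDerivAt_intervalIntegral_of_continuousOn
    (F := fun s t => phiIntegrand γ e (update x (r, i) s) t)
    (F' := fun s t => γ i * ((t : ℂ) ^ (r : ℕ) *
      phiIntegrand (update γ i (γ i - 1)) e (update x (r, i) s) t))
    (half_pos (hx (r, i))) (by simpa using hcont γ 0) (continuousOn_const.mul (hcont _ r))
    fun t ht s hs => by
      simpa [update_idem, mul_assoc] using
        hasDerivAt_phiIntegrand_update γ e (hupdate s (hball s (ball_subset_closedBall hs)))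
          (pos_of_mem_uIcc ha hb ht) r i
  simpa [pd, intervalIntegral.integral_const_mul] using hderiv.deriv

theorem integral_sum_phiIntegrand_update (γ : Fin n → ℂ) (e : ℂ) {x : Fin 2 × Fin n → ℝ}
    (hx : ∀ p, 0 < x p) (ha : 0 < a) (hb : 0 < b) :
    ∫ t in a..b, ∑ i, γ i * x (1, i) * phiIntegrand (update γ i (γ i - 1)) e x t
      = phiIntegrand γ e x b - phiIntegrand γ e x a
        - e * ∫ t in a..b, phiIntegrand γ (e - 1) x t := by
  have hint : ∀ γ' e', IntervalIntegrable (phiIntegrand γ' e' x) volume a b := fun γ' e' => by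
    simpa using intervalIntegrable_pow_mul_phiIntegrand γ' e' hx ha hb 0
  have hsum : IntervalIntegrable
      (fun t => ∑ i, γ i * x (1, i) * phiIntegrand (update γ i (γ i - 1)) e x t) volume a b := by
    simpa only [Finset.sum_fn] using IntervalIntegrable.sum univ fun i _ =>
      (hint (update γ i (γ i - 1)) e).const_mul (γ i * x (1, i))
  have hftc := intervalIntegral.integral_eq_sub_of_hasDerivAt
    (fun t ht => hasDerivAt_phiIntegrand γ e hx (pos_of_mem_uIcc ha hb ht))
    (((hint γ (e - 1)).const_mul e).add hsum)
  rw [intervalIntegral.integral_add ((hint γ (e - 1)).const_mul e) hsum,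
    intervalIntegral.integral_const_mul] at hftc
  linear_combination hftc

theorem mul_pd_zero_add_mul_pd_one_integral_phiIntegrand (α : Fin n → ℂ) (e : ℂ)
    {x : Fin 2 × Fin n → ℝ} (hx : ∀ p, 0 < x p) (ha : 0 < a) (hb : 0 < b) {i k : Fin n}
    (hik : i ≠ k) :
    (x (0, k) : ℂ) * pd (0, i) (fun y => ∫ t in a..b, phiIntegrand (update α k (α k - 1)) e y t) x
      + x (1, k) * pd (1, i) (fun y => ∫ t in a..b, phiIntegrand (update α k (α k - 1)) e y t) x
      = α i * ∫ t in a..b, phiIntegrand (update α i (α i - 1)) e x t := by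
  set φ := phiIntegrand (update (update α k (α k - 1)) i (α i - 1)) e x
  have hpoint : ∀ t ∈ [[a, b]], (x (0, k) : ℂ) * ((t : ℂ) ^ ((0 : Fin 2) : ℕ) * φ t)
      + x (1, k) * ((t : ℂ) ^ ((1 : Fin 2) : ℕ) * φ t)
      = phiIntegrand (update α i (α i - 1)) e x t := fun t ht => by
    have hk : (x (0, k) : ℂ) + x (1, k) * t ≠ 0 := slitPlane_ne_zero <|
      ofReal_add_mul_mem_slitPlane (hx _) (hx _) (pos_of_mem_uIcc ha hb ht)
    have key := prod_cpow_update_sub_one_mul (z := fun j => (x (0, j) : ℂ) + x (1, j) * t)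
      (update α i (α i - 1)) hk
    simp only [update_of_ne hik.symm, update_comm hik] at key
    simp only [φ, phiIntegrand, ← key, Fin.val_zero, Fin.val_one, pow_zero, pow_one]
    ring
  have hint : ∀ m : ℕ, IntervalIntegrable (fun t => (t : ℂ) ^ m * φ t) volume a b :=
    intervalIntegrable_pow_mul_phiIntegrand _ e hx ha hb
  rw [pd_integral_phiIntegrand _ e hx ha hb, pd_integral_phiIntegrand _ e hx ha hb,
    update_of_ne hik, ← intervalIntegral.integral_congr hpoint,
    intervalIntegral.integral_add ((hint _).const_mul _) ((hint _).const_mul _),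
    intervalIntegral.integral_const_mul, intervalIntegral.integral_const_mul]
  ring

end Integrals

theorem stmt15_general {n : ℕ} (α : Fin n → ℂ) (δ : ℂ) (a b : ℝ)
    (ha : 0 < a) (hab : a < b)
    (k : Fin n) (x : (Fin 2 × Fin n) → ℝ) (hx : ∀ p, 0 < x p) :
    ∑ i ∈ Finset.univ \ {k},
        ((x (0, k) * x (1, i) : ℝ) : ℂ)
          * pd (0, i) (Phi (Function.update α k (α k - 1)) (δ - 1) a b) x
      + (x (1, k) : ℂ) * ∑ i ∈ Finset.univ \ {k},
          (x (1, i) : ℂ)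
            * pd (1, i) (Phi (Function.update α k (α k - 1)) (δ - 1) a b) x
      + α k * (x (1, k) : ℂ) * Phi (Function.update α k (α k - 1)) (δ - 1) a b x
      = δ * Phi α δ a b x + (gfun α δ b x - gfun α δ a x) := by
  have hb : 0 < b := ha.trans hab
  have hΨ : Phi (update α k (α k - 1)) (δ - 1) a b
      = fun y => ∫ t in a..b, phiIntegrand (update α k (α k - 1)) (-δ) y t := by
    rw [Phi_eq_integral_phiIntegrand, show -(δ - 1) - 1 = -δ by ring]
  set T : Fin n → ℝ → ℂ := fun i t =>
    α i * x (1, i) * phiIntegrand (update α i (α i - 1)) (-δ) x t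
  have hcolumn : ∀ i ∈ univ \ {k}, ((x (0, k) * x (1, i) : ℝ) : ℂ)
      * pd (0, i) (Phi (update α k (α k - 1)) (δ - 1) a b) x
      + x (1, k) * (x (1, i) * pd (1, i) (Phi (update α k (α k - 1)) (δ - 1) a b) x)
      = ∫ t in a..b, T i t := fun i hi => by
    rw [intervalIntegral.integral_const_mul, hΨ, mul_comm (α i), mul_assoc,
      ← mul_pd_zero_add_mul_pd_one_integral_phiIntegrand α (-δ) hx ha hb (by simpa using hi)]
    push_cast
    ring
  calc _ = (∑ i ∈ univ \ {k}, ∫ t in a..b, T i t) + ∫ t in a..b, T k t := by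
        rw [mul_sum, ← sum_add_distrib, sum_congr rfl hcolumn, intervalIntegral.integral_const_mul,
          hΨ]
    _ = ∫ t in a..b, ∑ i, T i t := by
        rw [intervalIntegral.integral_finsetSum, ← sum_sdiff (subset_univ {k}), sum_singleton]
        intro i _
        simpa using (intervalIntegrable_pow_mul_phiIntegrand _ (-δ) hx ha hb 0).const_mul
          (α i * x (1, i))
    _ = _ := by
        rw [integral_sum_phiIntegrand_update α (-δ) hx ha hb, Phi_eq_integral_phiIntegrand,
          gfun_eq_phiIntegrand, gfun_eq_phiIntegrand]
        ring

/-- up-step contiguity in `a_{2k}`, where `Ψ = Φ(α − e_k, δ − 1; ·)`: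
`Σ_{i≠k} x_{1k}x_{2i}·∂Ψ/∂x_{1i} + x_{2k}·Σ_{i≠k} x_{2i}·∂Ψ/∂x_{2i} + α_k·x_{2k}·Ψ
  = δ·Φ(α,δ;x) + [g(t,x)]_{t=a}^{t=b}`. -/
theorem stmt15 {n : ℕ} (hn : 1 ≤ n) (α : Fin n → ℂ) (δ : ℂ) (a b : ℝ)
    (ha : 0 < a) (hab : a < b) (hδ : 0 < (-δ - 1).re) (hα : ∀ k, 0 < (α k).re)
    (k : Fin n) (x : (Fin 2 × Fin n) → ℝ) (hx : ∀ p, 0 < x p) :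
    ∑ i ∈ Finset.univ \ {k},
        ((x (0, k) * x (1, i) : ℝ) : ℂ)
          * pd (0, i) (Phi (Function.update α k (α k - 1)) (δ - 1) a b) x
      + (x (1, k) : ℂ) * ∑ i ∈ Finset.univ \ {k},
          (x (1, i) : ℂ)
            * pd (1, i) (Phi (Function.update α k (α k - 1)) (δ - 1) a b) x
      + α k * (x (1, k) : ℂ) * Phi (Function.update α k (α k - 1)) (δ - 1) a b x
      = δ * Phi α δ a b x + (gfun α δ b x - gfun α δ a x) :=
  stmt15_general α δ a b ha hab k x hx
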